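/- Let f : [0,1] → ℝ be a nonnegative integrable function, and define g(z) = ∫_0^z t f(t) dt and h(z) = ∫_0^z f(t) dt. Assume g(1) = 1 and h(1) = 2. Then for every z ∈ [0,1], ∫_0^1 max( t z, (1−t)(1−z) ) f(t) dt = z − g(1−z) + (1−z) h(1−z). -/
import Mathlib


open MeasureTheory

/-- The representation of the Pickands dependence function of a bivariate spectral
density: `∫_0^1 max(tz, (1−t)(1−z)) f(t) dt = z − g(1−z) + (1−z) h(1−z)`, where
`g(z) = ∫_0^z t f(t) dt` and `h(z) = ∫_0^z f(t) dt` with `g(1) = 1`, `h(1) = 2`. -/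
theorem stmt15
    (f : ℝ → ℝ)
    (hf0 : ∀ t ∈ Set.Icc (0 : ℝ) 1, 0 ≤ f t)
    (hfint : IntegrableOn f (Set.Icc (0 : ℝ) 1))
    (g h : ℝ → ℝ)
    (hg : ∀ z : ℝ, g z = ∫ t in (0 : ℝ)..z, t * f t)
    (hh : ∀ z : ℝ, h z = ∫ t in (0 : ℝ)..z, f t)
    (hg1 : g 1 = 1) (hh1 : h 1 = 2) :
    ∀ z ∈ Set.Icc (0 : ℝ) 1,
      (∫ t in (0 : ℝ)..1, max (t * z) ((1 - t) * (1 - z)) * f t) =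
        z - g (1 - z) + (1 - z) * h (1 - z) := by
  intro z hz
  obtain ⟨hz0, hz1⟩ := hz
  set c : ℝ := 1 - z with hcdef
  have hc0 : (0:ℝ) ≤ c := by simp only [hcdef]; linarith
  have hc1 : c ≤ 1 := by simp only [hcdef]; linarith
  -- general integrability lemma
  have key : ∀ (φ : ℝ → ℝ), Continuous φ →
      IntegrableOn (fun t => φ t * f t) (Set.Icc (0:ℝ) 1) := by
    intro φ hφ
    obtain ⟨C, hC⟩ : ∃ C, ∀ t ∈ Set.Icc (0:ℝ) 1, ‖φ t‖ ≤ C := by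
      obtain ⟨C, hC⟩ := (isCompact_Icc.image hφ).isBounded.exists_norm_le
      exact ⟨C, fun t ht => hC _ (Set.mem_image_of_mem _ ht)⟩
    refine Integrable.bdd_mul (c := C) hfint (hφ.aestronglyMeasurable.restrict) ?_
    rw [ae_restrict_iff' measurableSet_Icc]
    exact Filter.Eventually.of_forall hC
  have sub1 : ∀ a b : ℝ, a ∈ Set.Icc (0:ℝ) 1 → b ∈ Set.Icc (0:ℝ) 1 →
      ∀ (φ : ℝ → ℝ), Continuous φ →
      IntervalIntegrable (fun t => φ t * f t) volume a b := by
    intro a b ha hb φ hφ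
    exact ((key φ hφ).mono_set (Set.uIcc_subset_Icc ha hb)).intervalIntegrable
  have hmem0 : (0:ℝ) ∈ Set.Icc (0:ℝ) 1 := by constructor <;> norm_num
  have hmem1 : (1:ℝ) ∈ Set.Icc (0:ℝ) 1 := by constructor <;> norm_num
  have hmemc : c ∈ Set.Icc (0:ℝ) 1 := ⟨hc0, hc1⟩
  have hφmax : Continuous fun t : ℝ => max (t * z) ((1 - t) * (1 - z)) :=
    (continuous_id.mul continuous_const).max
      ((continuous_const.sub continuous_id).mul continuous_const)
  have hφid : Continuous fun t : ℝ => t := continuous_id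
  have hφone : Continuous fun _ : ℝ => (1:ℝ) := continuous_const
  -- split the integral at c
  have hsplit :
      (∫ t in (0:ℝ)..c, max (t * z) ((1 - t) * (1 - z)) * f t) +
      (∫ t in c..(1:ℝ), max (t * z) ((1 - t) * (1 - z)) * f t) =
      ∫ t in (0:ℝ)..1, max (t * z) ((1 - t) * (1 - z)) * f t :=
    intervalIntegral.integral_add_adjacent_intervals
      (sub1 0 c hmem0 hmemc _ hφmax) (sub1 c 1 hmemc hmem1 _ hφmax)
  -- first piece
  have e1 : (∫ t in (0:ℝ)..c, max (t * z) ((1 - t) * (1 - z)) * f t) =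
      (1 - z) * h c - (1 - z) * g c := by
    have congr1 : (∫ t in (0:ℝ)..c, max (t * z) ((1 - t) * (1 - z)) * f t) =
        ∫ t in (0:ℝ)..c, ((1 - z) * f t - (1 - z) * (t * f t)) := by
      apply intervalIntegral.integral_congr
      intro t ht
      rw [Set.uIcc_of_le hc0] at ht
      obtain ⟨ht0, htc⟩ := ht
      have hmax : max (t * z) ((1 - t) * (1 - z)) = (1 - t) * (1 - z) := by
        apply max_eq_right; nlinarith
      dsimp only; rw [hmax]; ring
    rw [congr1, intervalIntegral.integral_sub, intervalIntegral.integral_const_mul,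
      intervalIntegral.integral_const_mul, hg c, hh c]
    · have := sub1 0 c hmem0 hmemc _ hφone
      simpa using (this.const_mul (1 - z))
    · have := sub1 0 c hmem0 hmemc _ hφid
      simpa [mul_assoc] using (this.const_mul (1 - z))
  -- second piece
  have hId : (∫ t in (0:ℝ)..c, t * f t) + (∫ t in c..(1:ℝ), t * f t) =
      ∫ t in (0:ℝ)..1, t * f t :=
    intervalIntegral.integral_add_adjacent_intervals
      (sub1 0 c hmem0 hmemc _ hφid) (sub1 c 1 hmemc hmem1 _ hφid)
  have e2 : (∫ t in c..(1:ℝ), max (t * z) ((1 - t) * (1 - z)) * f t) =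
      z * (1 - g c) := by
    have congr2 : (∫ t in c..(1:ℝ), max (t * z) ((1 - t) * (1 - z)) * f t) =
        ∫ t in c..(1:ℝ), z * (t * f t) := by
      apply intervalIntegral.integral_congr
      intro t ht
      rw [Set.uIcc_of_le hc1] at ht
      obtain ⟨htc, ht1⟩ := ht
      have hmax : max (t * z) ((1 - t) * (1 - z)) = t * z := by
        apply max_eq_left; nlinarith
      dsimp only; rw [hmax]; ring
    rw [congr2, intervalIntegral.integral_const_mul]
    have : (∫ t in c..(1:ℝ), t * f t) = 1 - g c := by
      have h1 : (∫ t in (0:ℝ)..1, t * f t) = 1 := by rw [← hg 1, hg1]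
      rw [hg c]; linarith
    rw [this]
  rw [← hsplit, e1, e2]
  ring
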